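/- Let F ∈ {S, R, T}, let G be a finite connected simple graph with at least one edge, and let H be any finite dispersable bipartite graph (H is bipartite and mbt(H) = Δ(H)). If F(G) is dispersable (mbt(F(G)) = Δ(F(G))), then G +_F H is dispersable, i.e., mbt(G +_F H) = Δ(G +_F H). -/

import Mathlib

open SimpleGraph

/-- Degree of a vertex. -/
noncomputable def deg {V : Type*} (G : SimpleGraph V) (v : V) : ℕ :=
  (G.neighborSet v).ncard

/-- Maximum degree Δ(G) of a finite simple graph. -/
noncomputable def maxDeg {V : Type*} [Fintype V] (G : SimpleGraph V) : ℕ :=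
  Finset.univ.sup (deg G)

/-- `IsMBE G k f page` : the linear order on vertices given by the injection `f : V → ℕ`
together with the page assignment `page` is a matching book embedding of `G` on `k` pages:
every edge gets a page `< k`, no two edges on a common page cross, and every vertex is
incident to at most one edge on each page. -/
def IsMBE {V : Type*} (G : SimpleGraph V) (k : ℕ) (f : V → ℕ) (page : Sym2 V → ℕ) : Prop :=
  Function.Injective f ∧
  (∀ u v, G.Adj u v → page s(u, v) < k) ∧
  (∀ u v x y, G.Adj u v → G.Adj x y → page s(u, v) = page s(x, y) →
    ¬(f u < f x ∧ f x < f v ∧ f v < f y)) ∧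
  (∀ u v w, G.Adj u v → G.Adj u w → v ≠ w → page s(u, v) ≠ page s(u, w))

/-- The matching book thickness of `G`: the least number of pages admitting a
matching book embedding. -/
noncomputable def mbt {V : Type*} (G : SimpleGraph V) : ℕ :=
  sInf {k | ∃ f page, IsMBE G k f page}

/-- A graph is outerplanar iff it has a one-page book embedding: a linear order of
its vertices (an injection into `ℕ`) in which no two edges cross. -/
def IsOuterplanar {V : Type*} (G : SimpleGraph V) : Prop :=
  ∃ f : V → ℕ, Function.Injective f ∧
    ∀ u v x y, G.Adj u v → G.Adj x y → ¬(f u < f x ∧ f x < f v ∧ f v < f y)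

/-- The derived graph of `G` on vertex set `V(G) ⊕ E(G)`. Black–white edges
(`u`–`(uv)` for `u` an endpoint of the edge `uv`) are always present; `black` indicates
whether the original edges of `G` are retained, and `white` indicates whether two edge
vertices corresponding to adjacent edges of `G` (distinct edges sharing an endpoint)
are joined. -/
def derivedG {V : Type*} (G : SimpleGraph V) (black white : Bool) :
    SimpleGraph (V ⊕ G.edgeSet) where
  Adj x y :=
    match x, y with
    | Sum.inl u, Sum.inl v => black = true ∧ G.Adj u v
    | Sum.inl u, Sum.inr e => u ∈ (e : Sym2 V)
    | Sum.inr e, Sum.inl u => u ∈ (e : Sym2 V)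
    | Sum.inr e, Sum.inr f =>
        white = true ∧ e ≠ f ∧ ∃ w, w ∈ (e : Sym2 V) ∧ w ∈ (f : Sym2 V)
  symm := by
    constructor
    rintro (u | e) (v | f) h
    · exact ⟨h.1, h.2.symm⟩
    · exact h
    · exact h
    · obtain ⟨hw, hne, w, h1, h2⟩ := h
      exact ⟨hw, hne.symm, w, h2, h1⟩
  loopless := by
    constructor
    rintro (u | e) h
    · exact G.loopless.irrefl u h.2
    · exact h.2.1 rfl

/-- The four graph operations `S`, `R`, `Q`, `T`. -/
inductive FOp : Type
  | S | R | Q | T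
  deriving DecidableEq

/-- Whether the operation retains the original (black–black) edges of `G`. -/
def FOp.black : FOp → Bool
  | .R => true
  | .T => true
  | _ => false

/-- Whether the operation joins edge (white) vertices of adjacent edges. -/
def FOp.white : FOp → Bool
  | .Q => true
  | .T => true
  | _ => false

/-- `FGraph F G` is the graph `F(G)` for `F ∈ {S, R, Q, T}`. -/
def FGraph (F : FOp) {V : Type*} (G : SimpleGraph V) : SimpleGraph (V ⊕ G.edgeSet) :=
  derivedG G F.black F.white

/-- The `F`-sum `G +_F H`: vertex set `(V(G) ∪ E(G)) × V(H)`; `(u₁, u₂)` and `(v₁, v₂)`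
are adjacent iff `u₁ = v₁ ∈ V(G)` and `u₂v₂ ∈ E(H)`, or `u₂ = v₂` and
`u₁v₁ ∈ E(F(G))`. -/
def FSum (F : FOp) {V W : Type*} (G : SimpleGraph V) (H : SimpleGraph W) :
    SimpleGraph ((V ⊕ G.edgeSet) × W) where
  Adj x y :=
    (x.1 = y.1 ∧ (∃ u : V, x.1 = Sum.inl u) ∧ H.Adj x.2 y.2) ∨
    (x.2 = y.2 ∧ (FGraph F G).Adj x.1 y.1)
  symm := by
    constructor
    rintro ⟨a, b⟩ ⟨c, d⟩ (⟨h1, h2, h3⟩ | ⟨h1, h2⟩)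
    · exact Or.inl ⟨h1.symm, h1 ▸ h2, h3.symm⟩
    · exact Or.inr ⟨h1.symm, h2.symm⟩
  loopless := by
    constructor
    rintro ⟨a, b⟩ (⟨-, -, h⟩ | ⟨-, h⟩)
    · exact H.loopless.irrefl b h
    · exact (FGraph F G).loopless.irrefl a h

/-- The path graph `P_n` on `n` vertices. -/
def pathG (n : ℕ) : SimpleGraph (Fin n) where
  Adj i j := (i : ℕ) + 1 = (j : ℕ) ∨ (j : ℕ) + 1 = (i : ℕ)
  symm := by constructor; intro i j h; tauto
  loopless := by constructor; intro i h; omega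

instance (n : ℕ) : DecidableRel (pathG n).Adj := fun i j =>
  inferInstanceAs (Decidable (_ ∨ _))

/-- The cycle graph `C_n` on `n` vertices (intended for `n ≥ 3`). -/
def cycleG (n : ℕ) : SimpleGraph (Fin n) where
  Adj i j := i ≠ j ∧ (((i : ℕ) + 1) % n = (j : ℕ) ∨ ((j : ℕ) + 1) % n = (i : ℕ))
  symm := by constructor; intro i j h; tauto
  loopless := by constructor; intro i h; exact h.1 rfl

instance (n : ℕ) : DecidableRel (cycleG n).Adj := fun i j =>
  inferInstanceAs (Decidable (_ ∧ _))

/-- The star graph `S_n = K_{1,n}` on `n + 1` vertices: vertex `0` is the center. -/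
def starG (n : ℕ) : SimpleGraph (Fin (n + 1)) where
  Adj i j := i ≠ j ∧ (i = 0 ∨ j = 0)
  symm := by constructor; intro i j h; tauto
  loopless := by constructor; intro i h; exact h.1 rfl

instance (n : ℕ) : DecidableRel (starG n).Adj := fun i j =>
  inferInstanceAs (Decidable (_ ∧ _))

/-- The circulant graph `C(ℤ_m, {1, 2})`: vertices `0, …, m - 1`, with `i` adjacent to
`j` iff `i - j ≡ ±1` or `±2 (mod m)`. -/
def circulantG12 (m : ℕ) : SimpleGraph (Fin m) where
  Adj i j := i ≠ j ∧
    (((i : ℕ) + 1) % m = (j : ℕ) ∨ ((i : ℕ) + 2) % m = (j : ℕ) ∨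
     ((j : ℕ) + 1) % m = (i : ℕ) ∨ ((j : ℕ) + 2) % m = (i : ℕ))
  symm := by constructor; intro i j h; tauto
  loopless := by constructor; intro i h; exact h.1 rfl

/-!
`G +_F H` is a subgraph of the Cartesian product `F(G) □ H`. For bipartite `H`, laying out the
copies `F(G) × {w}` one after another in the order of an optimal embedding of `H`, each copy
forwards or backwards according to the colour of `w`, embeds `F(G) □ H` on
`mbt F(G) + mbt H = Δ(F(G)) + Δ(H)` pages. If `Δ(F(G))` is the degree of an original vertex `u`,
then `(u, w)` has degree `Δ(F(G)) + Δ(H)` in `G +_F H`, so this is optimal. For `F = R, T` an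
edge vertex `xy` has degree at most `deg x + deg y ≤ 2 Δ(G)`, which an original vertex attains;
for `F = S` an edge vertex can only be the unique maximum when `Δ(G) = 1`, i.e. `G = K₂`, and then
`G +_S H` is two copies of `H` joined by paths of length two, which a direct layout embeds on
`max(Δ(H), 1) + 1` pages.
-/

open Function

section MatchingBookEmbedding

variable {X Y : Type*} {G : SimpleGraph X} {G' : SimpleGraph Y} {k : ℕ}

theorem IsMBE.comap {f : Y → ℕ} {page : Sym2 Y → ℕ} (h : IsMBE G' k f page) (φ : Copy G G') :
    IsMBE G k (f ∘ φ) (page ∘ Sym2.map φ) := by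
  obtain ⟨hinj, hlt, hcross, hmatch⟩ := h
  have hφ {u v : X} (huv : G.Adj u v) : G'.Adj (φ u) (φ v) := φ.toHom.map_adj huv
  exact ⟨hinj.comp φ.injective, fun u v huv => hlt _ _ (hφ huv),
    fun u v x y huv hxy => hcross _ _ _ _ (hφ huv) (hφ hxy),
    fun u v w huv huw hvw => hmatch _ _ _ (hφ huv) (hφ huw) (φ.injective.ne hvw)⟩

theorem IsMBE.eq_of_weakly_crossing {f : X → ℕ} {page : Sym2 X → ℕ} (h : IsMBE G k f page)
    {u v x y : X} (huv : G.Adj u v) (hxy : G.Adj x y) (hp : page s(u, v) = page s(x, y))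
    (hux : f u ≤ f x) (hxv : f x ≤ f v) (hvy : f v ≤ f y) : u = x ∧ v = y := by
  obtain ⟨hinj, -, hcross, hmatch⟩ := h
  by_cases hux' : u = x
  · subst hux'
    exact ⟨rfl, by_contra fun hvy' => hmatch u v y huv hxy hvy' hp⟩
  by_cases hvy' : v = y
  · subst hvy'
    refine absurd ?_ (hmatch v u x huv.symm hxy.symm hux')
    rwa [Sym2.eq_swap, Sym2.eq_swap (a := v)]
  by_cases hxv' : x = v
  · subst hxv'
    have huy : u = y := by_contra fun huy => hmatch x u y huv.symm hxy huy (by rwa [Sym2.eq_swap])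
    subst huy
    exact absurd (hinj (le_antisymm hux (hxv.trans hvy))) hux'
  exact absurd ⟨lt_of_le_of_ne hux (hinj.ne hux'), lt_of_le_of_ne hxv (hinj.ne hxv'),
    lt_of_le_of_ne hvy (hinj.ne hvy')⟩ (hcross u v x y huv hxy hp)

theorem exists_isMBE [Finite X] (G : SimpleGraph X) : ∃ k f page, IsMBE G k f page := by
  obtain ⟨n, ⟨eX⟩⟩ := Finite.exists_equiv_fin X
  obtain ⟨k, ⟨eE⟩⟩ := Finite.exists_equiv_fin (Sym2 X)
  refine ⟨k, fun x => eX x, fun e => eE e, fun x y h => eX.injective (Fin.val_injective h),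
    fun u v _ => (eE _).is_lt, ?_, ?_⟩
  · intro u v x y _ _ hp ⟨h₁, h₂, h₃⟩
    rcases Sym2.eq_iff.mp (eE.injective (Fin.val_injective hp)) with ⟨rfl, rfl⟩ | ⟨rfl, rfl⟩
    · exact h₁.false
    · omega
  · exact fun u v w _ _ hvw hp => hvw (Sym2.congr_right.mp (eE.injective (Fin.val_injective hp)))

theorem exists_isMBE_mbt [Finite X] (G : SimpleGraph X) : ∃ f page, IsMBE G (mbt G) f page :=
  Nat.sInf_mem (exists_isMBE G)

theorem mbt_le_of_isMBE {f : X → ℕ} {page : Sym2 X → ℕ} (h : IsMBE G k f page) : mbt G ≤ k :=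
  Nat.sInf_le ⟨f, page, h⟩

theorem mbt_le_mbt_of_copy [Finite Y] (φ : Copy G G') : mbt G ≤ mbt G' :=
  let ⟨_, _, h⟩ := exists_isMBE_mbt G'
  mbt_le_of_isMBE (h.comap φ)

theorem mbt_eq_zero_of_isEmpty [IsEmpty X] (G : SimpleGraph X) : mbt G = 0 :=
  Nat.le_zero.mp <| mbt_le_of_isMBE (f := fun _ => 0) (page := fun _ => 0)
    ⟨fun x => isEmptyElim x, fun x => isEmptyElim x, fun x => isEmptyElim x,
      fun x => isEmptyElim x⟩

theorem deg_le_of_isMBE [Finite X] {f : X → ℕ} {page : Sym2 X → ℕ} (h : IsMBE G k f page)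
    (v : X) : deg G v ≤ k := by
  obtain ⟨-, hlt, -, hmatch⟩ := h
  calc deg G v ≤ (Set.Iio k).ncard :=
        Set.ncard_le_ncard_of_injOn (fun x => page s(v, x)) (fun x hx => hlt v x hx)
          (fun x hx y hy hxy => by_contra fun hne => hmatch v x y hx hy hne hxy)
          (Set.finite_Iio k)
    _ = k := Set.ncard_Iio_nat k

theorem le_maxDeg [Fintype X] (G : SimpleGraph X) (v : X) : deg G v ≤ maxDeg G :=
  Finset.le_sup (Finset.mem_univ v)

theorem exists_maxDeg_eq_deg [Fintype X] [Nonempty X] (G : SimpleGraph X) :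
    ∃ v, maxDeg G = deg G v :=
  let ⟨v, _, hv⟩ := Finset.exists_mem_eq_sup Finset.univ Finset.univ_nonempty (deg G)
  ⟨v, hv⟩

theorem maxDeg_le_mbt [Fintype X] (G : SimpleGraph X) : maxDeg G ≤ mbt G :=
  let ⟨_, _, h⟩ := exists_isMBE_mbt G
  Finset.sup_le fun v _ => deg_le_of_isMBE h v

theorem deg_eq_degree (G : SimpleGraph X) (v : X) [Fintype (G.neighborSet v)] :
    deg G v = G.degree v := by
  rw [deg, ← Nat.card_coe_set_eq, Nat.card_eq_fintype_card, card_neighborSet_eq_degree]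

theorem deg_le_deg_of_copy [Finite Y] (φ : Copy G G') (v : X) : deg G v ≤ deg G' (φ v) :=
  Set.ncard_le_ncard_of_injOn φ (fun _ h => φ.toHom.map_adj h) φ.injective.injOn

theorem exists_forall_lt_of_finite [Finite X] (f : X → ℕ) : ∃ N, ∀ x, f x < N :=
  let ⟨N, hN⟩ := (Set.finite_range f).bddAbove
  ⟨N + 1, fun x => Nat.lt_succ_of_le (hN ⟨x, rfl⟩)⟩

end MatchingBookEmbedding

section BoxProduct

variable {X W : Type*} {G : SimpleGraph X} {H : SimpleGraph W}

/-- Lexicographic in `(f₂ w, ±f₁ x)`, the sign chosen by `c w`; `N` has to bound `f₁`. -/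
def boustrophedon (N : ℕ) (f₁ : X → ℕ) (f₂ : W → ℕ) (c : W → Bool) (p : X × W) : ℕ :=
  N * f₂ p.2 + if c p.2 then f₁ p.1 else N - 1 - f₁ p.1

def boxPage [DecidableEq W] (A : ℕ) (pg₁ : Sym2 X → ℕ) (pg₂ : Sym2 W → ℕ) (e : Sym2 (X × W)) :
    ℕ :=
  if (e.map Prod.snd).IsDiag then pg₁ (e.map Prod.fst) else A + pg₂ (e.map Prod.snd)

theorem boxPage_mk [DecidableEq W] (A : ℕ) (pg₁ : Sym2 X → ℕ) (pg₂ : Sym2 W → ℕ) (p q : X × W) :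
    boxPage A pg₁ pg₂ s(p, q) = if p.2 = q.2 then pg₁ s(p.1, q.1) else A + pg₂ s(p.2, q.2) := by
  simp [boxPage]

section Boustrophedon

variable {N : ℕ} {f₁ : X → ℕ} (f₂ : W → ℕ) (c : W → Bool) (hN : ∀ x, f₁ x < N)
include hN

theorem boustrophedon_div (p : X × W) : boustrophedon N f₁ f₂ c p / N = f₂ p.2 := by
  have := hN p.1
  rw [boustrophedon, Nat.mul_add_div (by omega), Nat.div_eq_of_lt (by split <;> omega), add_zero]

theorem boustrophedon_mod (p : X × W) :
    boustrophedon N f₁ f₂ c p % N = if c p.2 then f₁ p.1 else N - 1 - f₁ p.1 := by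
  have := hN p.1
  rw [boustrophedon, Nat.mul_add_mod, Nat.mod_eq_of_lt (by split <;> omega)]

theorem boustrophedon_injective (hf₁ : Injective f₁) (hf₂ : Injective f₂) :
    Injective (boustrophedon N f₁ f₂ c) := by
  intro p q h
  have hw : p.2 = q.2 := hf₂ (by rw [← boustrophedon_div f₂ c hN, h, boustrophedon_div f₂ c hN])
  have hx := boustrophedon_mod f₂ c hN p
  rw [h, boustrophedon_mod f₂ c hN, hw] at hx
  have := hN p.1; have := hN q.1
  exact Prod.ext (hf₁ (by split at hx <;> omega)) hw

theorem le_of_boustrophedon_lt {p q : X × W}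
    (h : boustrophedon N f₁ f₂ c p < boustrophedon N f₁ f₂ c q) : f₂ p.2 ≤ f₂ q.2 := by
  rw [← boustrophedon_div f₂ c hN, ← boustrophedon_div f₂ c hN]
  exact Nat.div_le_div_right h.le

theorem boustrophedon_lt_iff {x y : X} {w : W} :
    boustrophedon N f₁ f₂ c (x, w) < boustrophedon N f₁ f₂ c (y, w) ↔
      if c w then f₁ x < f₁ y else f₁ y < f₁ x := by
  have := hN x; have := hN y
  rw [boustrophedon, boustrophedon, Nat.add_lt_add_iff_left]
  dsimp only
  split <;> omega

end Boustrophedon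

/- On an `H`-edge the two columns run in opposite directions, which keeps parallel `H`-edges on
a common page nested. -/
theorem IsMBE.boxProd [Finite X] {A B : ℕ} {f₁ : X → ℕ} {pg₁ : Sym2 X → ℕ} {f₂ : W → ℕ}
    {pg₂ : Sym2 W → ℕ} (h₁ : IsMBE G A f₁ pg₁) (h₂ : IsMBE H B f₂ pg₂) (c : H.Coloring Bool) :
    ∃ f page, IsMBE (G □ H) (A + B) f page := by
  classical
  obtain ⟨N, hN⟩ := exists_forall_lt_of_finite f₁
  have hle {p q} := le_of_boustrophedon_lt f₂ c hN (p := p) (q := q)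
  refine ⟨boustrophedon N f₁ f₂ c, boxPage A pg₁ pg₂, boustrophedon_injective f₂ c hN h₁.1 h₂.1,
    ?_, ?_, ?_⟩
  · rintro ⟨x, w⟩ ⟨y, w'⟩ h
    rcases boxProd_adj.mp h with ⟨hxy, rfl⟩ | ⟨hww, rfl⟩
    · simpa [boxPage_mk] using (h₁.2.1 x y hxy).trans_le (Nat.le_add_right A B)
    · simpa [boxPage_mk, hww.ne] using h₂.2.1 w w' hww
  · rintro ⟨x₁, w₁⟩ ⟨y₁, w₂⟩ ⟨x₂, w₃⟩ ⟨y₂, w₄⟩ h h' hp ⟨c₁, c₂, c₃⟩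
    simp only [boxProd_adj] at h h'
    rcases h with ⟨hxy, rfl⟩ | ⟨hww, rfl⟩ <;> rcases h' with ⟨hxy', rfl⟩ | ⟨hww', rfl⟩
    · obtain rfl : w₁ = w₃ := h₂.1 (le_antisymm (hle c₁) (hle c₂))
      simp only [boxPage_mk, if_true] at hp
      rw [boustrophedon_lt_iff f₂ c hN] at c₁ c₂ c₃
      cases hc : c w₁ <;> simp only [hc, Bool.false_eq_true, if_true, if_false] at c₁ c₂ c₃
      · exact h₁.2.2.1 y₂ x₂ y₁ x₁ hxy'.symm hxy.symm
          (by rw [Sym2.eq_swap, ← hp, Sym2.eq_swap]) ⟨c₃, c₂, c₁⟩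
      · exact h₁.2.2.1 x₁ y₁ x₂ y₂ hxy hxy' hp ⟨c₁, c₂, c₃⟩
    · have := h₁.2.1 x₁ y₁ hxy
      simp [boxPage_mk, hww'.ne] at hp; omega
    · have := h₁.2.1 x₂ y₂ hxy'
      simp [boxPage_mk, hww.ne] at hp; omega
    · simp only [boxPage_mk, hww.ne, hww'.ne, if_false, Nat.add_left_cancel_iff] at hp
      obtain ⟨rfl, rfl⟩ := h₂.eq_of_weakly_crossing hww hww' hp (hle c₁) (hle c₂) (hle c₃)
      rw [boustrophedon_lt_iff f₂ c hN] at c₁ c₃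
      have hc := c.valid hww
      cases hc₁ : c w₁ <;> cases hc₂ : c w₂ <;> simp [hc₁, hc₂] at c₁ c₃ hc <;> omega
  · rintro ⟨x, w⟩ ⟨y₁, w₁⟩ ⟨y₂, w₂⟩ h h' hne
    simp only [boxProd_adj] at h h'
    rcases h with ⟨hxy, rfl⟩ | ⟨hww, rfl⟩ <;> rcases h' with ⟨hxy', rfl⟩ | ⟨hww', rfl⟩
    · simpa [boxPage_mk] using h₁.2.2.2 x y₁ y₂ hxy hxy' fun hy => hne (by rw [hy])
    · have := h₁.2.1 x y₁ hxy
      simp [boxPage_mk, hww'.ne]; omega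
    · have := h₁.2.1 x y₂ hxy'
      simp [boxPage_mk, hww.ne]; omega
    · simpa [boxPage_mk, hww.ne, hww'.ne] using
        h₂.2.2.2 w w₁ w₂ hww hww' fun hw => hne (by rw [hw])

theorem mbt_boxProd_le [Finite X] [Finite W] (hH : H.Colorable 2) :
    mbt (G □ H) ≤ mbt G + mbt H :=
  let ⟨_, _, h₁⟩ := exists_isMBE_mbt G
  let ⟨_, _, h₂⟩ := exists_isMBE_mbt H
  let ⟨_, _, h⟩ := h₁.boxProd h₂ (hH.toColoring (by simp))
  mbt_le_of_isMBE h

end BoxProduct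

section SubdividedPrism

variable {W : Type*}

/-- Two copies of `H` (rows `0` and `2`) joined by the paths `(0, w) – (1, w) – (2, w)`;
this is `G +_S H` for `G = K₂`. -/
def subdividedPrism (H : SimpleGraph W) : SimpleGraph (Fin 3 × W) where
  Adj p q := (p.2 = q.2 ∧ (pathG 3).Adj p.1 q.1) ∨ (p.1 = q.1 ∧ p.1 ≠ 1 ∧ H.Adj p.2 q.2)
  symm := by
    constructor
    rintro p q (⟨h₁, h₂⟩ | ⟨h₁, h₂, h₃⟩)
    exacts [Or.inl ⟨h₁.symm, h₂.symm⟩, Or.inr ⟨h₁.symm, h₁ ▸ h₂, h₃.symm⟩]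
  loopless := by
    constructor
    rintro p (⟨-, h⟩ | ⟨-, -, h⟩)
    exacts [(pathG 3).irrefl h, H.irrefl h]

variable {H : SimpleGraph W}

/-- `M` has to bound `f`. -/
def prismLayout (M : ℕ) (f : W → ℕ) (p : Fin 3 × W) : ℕ :=
  if p.1 = 0 then f p.2 else if p.1 = 1 then 2 * M - 1 - f p.2 else 2 * M + f p.2

/-- Rungs `0 – 1` go on page `d` and rungs `1 – 2` on page `0`; row `0` keeps the pages of `H`,
row `2` shifts them up by one. -/
def prismPage [DecidableEq W] (d : ℕ) (page : Sym2 W → ℕ) (e : Sym2 (Fin 3 × W)) : ℕ :=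
  if (e.map Prod.snd).IsDiag then (if 0 ∈ e.map Prod.fst then d else 0)
  else page (e.map Prod.snd) + if 0 ∈ e.map Prod.fst then 0 else 1

theorem subdividedPrism_adj_mk {i j : Fin 3} {w w' : W} :
    (subdividedPrism H).Adj (i, w) (j, w') ↔
      (w = w' ∧ (pathG 3).Adj i j) ∨ (i = j ∧ i ≠ 1 ∧ H.Adj w w') :=
  Iff.rfl

theorem prismLayout_injective {M : ℕ} {f : W → ℕ} (hf : Injective f) (hM : ∀ w, f w < M) :
    Injective (prismLayout M f) := by
  rintro ⟨i, w⟩ ⟨j, w'⟩ h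
  have := hM w; have := hM w'
  fin_cases i <;> fin_cases j <;> simp [prismLayout] at h ⊢ <;> first | exact hf (by omega) | omega

section PrismPage

variable [DecidableEq W] {B d : ℕ} {f : W → ℕ} {page : Sym2 W → ℕ} (h : IsMBE H B f page)
include h

theorem prismPage_lt (hB : B ≤ d) {p q : Fin 3 × W} (hpq : (subdividedPrism H).Adj p q) :
    prismPage d page s(p, q) < d + 1 := by
  obtain ⟨i, w⟩ := p; obtain ⟨j, w'⟩ := q
  rcases subdividedPrism_adj_mk.mp hpq with ⟨rfl, hij⟩ | ⟨rfl, hi, hww⟩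
  · fin_cases i <;> fin_cases j <;> simp [prismPage, pathG] at hij ⊢
  · have := h.2.1 w w' hww
    fin_cases i <;> simp [prismPage, hww.ne] at hi ⊢ <;> omega

theorem prismPage_ne (hB : B ≤ d) (hd : 1 ≤ d) {p q r : Fin 3 × W}
    (hpq : (subdividedPrism H).Adj p q) (hpr : (subdividedPrism H).Adj p r) (hqr : q ≠ r) :
    prismPage d page s(p, q) ≠ prismPage d page s(p, r) := by
  obtain ⟨i, w⟩ := p; obtain ⟨j₁, w₁⟩ := q; obtain ⟨j₂, w₂⟩ := r
  rcases subdividedPrism_adj_mk.mp hpq with ⟨rfl, h₁⟩ | ⟨rfl, h₁, h₁'⟩ <;>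
    rcases subdividedPrism_adj_mk.mp hpr with ⟨rfl, h₂⟩ | ⟨rfl, h₂, h₂'⟩
  · fin_cases i <;> fin_cases j₁ <;> fin_cases j₂ <;>
      simp [prismPage, pathG] at h₁ h₂ hqr ⊢ <;> omega
  · have := h.2.1 w w₂ h₂'
    fin_cases i <;> fin_cases j₁ <;> simp [prismPage, pathG, h₂'.ne] at h₁ h₂ ⊢
    omega
  · have := h.2.1 w w₁ h₁'
    fin_cases i <;> fin_cases j₂ <;> simp [prismPage, pathG, h₁'.ne] at h₁ h₂ ⊢
    omega
  · fin_cases i <;> simp [prismPage, h₁'.ne, h₂'.ne] at h₁ hqr ⊢ <;>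
      exact h.2.2.2 w w₁ w₂ h₁' h₂' hqr

theorem not_prismLayout_crossing {M : ℕ} (hM : ∀ w, f w < M) (hB : B ≤ d) (hd : 1 ≤ d)
    {u v x y : Fin 3 × W} (huv : (subdividedPrism H).Adj u v)
    (hxy : (subdividedPrism H).Adj x y) (hp : prismPage d page s(u, v) = prismPage d page s(x, y)) :
    ¬(prismLayout M f u < prismLayout M f x ∧ prismLayout M f x < prismLayout M f v ∧
      prismLayout M f v < prismLayout M f y) := by
  obtain ⟨i₁, w₁⟩ := u; obtain ⟨j₁, w₂⟩ := v; obtain ⟨i₂, w₃⟩ := x; obtain ⟨j₂, w₄⟩ := y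
  rintro ⟨c₁, c₂, c₃⟩
  have := hM w₁; have := hM w₂; have := hM w₃; have := hM w₄
  rcases subdividedPrism_adj_mk.mp huv with ⟨rfl, h₁⟩ | ⟨rfl, h₁, h₁'⟩ <;>
    rcases subdividedPrism_adj_mk.mp hxy with ⟨rfl, h₂⟩ | ⟨rfl, h₂, h₂'⟩
  · fin_cases i₁ <;> fin_cases j₁ <;> fin_cases i₂ <;> fin_cases j₂ <;>
      simp [prismLayout, prismPage, pathG] at h₁ h₂ hp c₁ c₂ c₃ <;> omega
  · have := h.2.1 w₃ w₄ h₂'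
    fin_cases i₁ <;> fin_cases j₁ <;> fin_cases i₂ <;>
      simp [prismLayout, prismPage, pathG, h₂'.ne] at h₁ h₂ hp c₁ c₂ c₃ <;> omega
  · have := h.2.1 w₁ w₂ h₁'
    fin_cases i₁ <;> fin_cases i₂ <;> fin_cases j₂ <;>
      simp [prismLayout, prismPage, pathG, h₁'.ne] at h₁ h₂ hp c₁ c₂ c₃ <;> omega
  · fin_cases i₁ <;> fin_cases i₂ <;>
      simp [prismLayout, prismPage, h₁'.ne, h₂'.ne] at h₁ h₂ hp c₁ c₂ c₃ <;>
      first | omega | exact h.2.2.1 w₁ w₂ w₃ w₄ h₁' h₂' hp ⟨c₁, c₂, c₃⟩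

end PrismPage

theorem IsMBE.subdividedPrism [Finite W] {B d : ℕ} {f : W → ℕ} {page : Sym2 W → ℕ}
    (h : IsMBE H B f page) (hB : B ≤ d) (hd : 1 ≤ d) :
    ∃ f' page', IsMBE (subdividedPrism H) (d + 1) f' page' := by
  classical
  obtain ⟨M, hM⟩ := exists_forall_lt_of_finite f
  exact ⟨prismLayout M f, prismPage d page, prismLayout_injective h.1 hM,
    fun _ _ => prismPage_lt h hB, fun _ _ _ _ => not_prismLayout_crossing h hM hB hd,
    fun _ _ _ => prismPage_ne h hB hd⟩

theorem mbt_subdividedPrism_le [Finite W] : mbt (subdividedPrism H) ≤ max (mbt H) 1 + 1 :=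
  let ⟨_, _, h⟩ := exists_isMBE_mbt H
  let ⟨_, _, h'⟩ := h.subdividedPrism (le_max_left _ 1) (le_max_right _ 1)
  mbt_le_of_isMBE h'

end SubdividedPrism

section DerivedGraph

variable {V : Type*} {G : SimpleGraph V} {bk wt : Bool}

theorem ncard_setOf_mem_edge (x : V) : {e : G.edgeSet | x ∈ (e : Sym2 V)}.ncard = deg G x := by
  classical
  rw [← Nat.card_coe_set_eq, deg, ← Nat.card_coe_set_eq,
    ← Nat.card_congr (G.incidenceSetEquivNeighborSet x)]
  exact Nat.card_congr (Equiv.subtypeSubtypeEquivSubtypeInter (· ∈ G.edgeSet) (x ∈ ·))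

theorem deg_le_deg_derivedG_inl [Finite V] (u : V) :
    deg G u ≤ deg (derivedG G bk wt) (Sum.inl u) := by
  rw [← ncard_setOf_mem_edge]
  exact Set.ncard_le_ncard_of_injOn Sum.inr (fun _ he => he) Sum.inr_injective.injOn

theorem two_mul_deg_le_deg_derivedG_inl [Finite V] (u : V) :
    2 * deg G u ≤ deg (derivedG G true wt) (Sum.inl u) := by
  have hsub : Sum.inl '' G.neighborSet u ∪ Sum.inr '' {e : G.edgeSet | u ∈ (e : Sym2 V)} ⊆
      (derivedG G true wt).neighborSet (Sum.inl u) := by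
    rintro _ (⟨v, hv, rfl⟩ | ⟨e, he, rfl⟩)
    exacts [⟨rfl, hv⟩, he]
  have hdisj : Disjoint (Sum.inl '' G.neighborSet u)
      (Sum.inr '' {e : G.edgeSet | u ∈ (e : Sym2 V)}) :=
    Set.disjoint_left.mpr (by rintro _ ⟨v, -, rfl⟩ ⟨e, -, he⟩; cases he)
  calc 2 * deg G u = (Sum.inl '' G.neighborSet u ∪
        Sum.inr '' {e : G.edgeSet | u ∈ (e : Sym2 V)}).ncard := by
        rw [Set.ncard_union_eq hdisj, Set.ncard_image_of_injective _ Sum.inl_injective,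
          Set.ncard_image_of_injective _ Sum.inr_injective, ncard_setOf_mem_edge, deg, two_mul]
    _ ≤ _ := Set.ncard_le_ncard hsub

/- Each neighbour of the edge vertex `e = xy` is charged to an edge at `x` or at `y`, the edge
`e` itself standing for the endpoint. -/
theorem deg_derivedG_inr_le [Finite V] {x y : V} (e : G.edgeSet) (he : (e : Sym2 V) = s(x, y)) :
    deg (derivedG G bk wt) (Sum.inr e) ≤ deg G x + deg G y := by
  classical
  let charge (v : V) (f : G.edgeSet) : V ⊕ G.edgeSet := if f = e then Sum.inl v else Sum.inr f
  have hsub : (derivedG G bk wt).neighborSet (Sum.inr e) ⊆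
      charge x '' {f | x ∈ (f : Sym2 V)} ∪ charge y '' {f | y ∈ (f : Sym2 V)} := by
    rintro (v | f) hadj
    · have hv : v ∈ (e : Sym2 V) := hadj
      rw [he, Sym2.mem_iff] at hv
      rcases hv with rfl | rfl
      · exact Or.inl ⟨e, by simp [he], if_pos rfl⟩
      · exact Or.inr ⟨e, by simp [he], if_pos rfl⟩
    · obtain ⟨-, hne, w, hwe, hwf⟩ := hadj
      rw [he, Sym2.mem_iff] at hwe
      rcases hwe with rfl | rfl
      · exact Or.inl ⟨f, hwf, if_neg (Ne.symm hne)⟩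
      · exact Or.inr ⟨f, hwf, if_neg (Ne.symm hne)⟩
  calc deg (derivedG G bk wt) (Sum.inr e)
      ≤ (charge x '' {f | x ∈ (f : Sym2 V)} ∪ charge y '' {f | y ∈ (f : Sym2 V)}).ncard :=
        Set.ncard_le_ncard hsub
    _ ≤ (charge x '' {f | x ∈ (f : Sym2 V)}).ncard +
          (charge y '' {f | y ∈ (f : Sym2 V)}).ncard :=
        Set.ncard_union_le _ _
    _ ≤ deg G x + deg G y := by
        rw [← ncard_setOf_mem_edge x, ← ncard_setOf_mem_edge y]
        exact add_le_add (Set.ncard_image_le (Set.toFinite _))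
          (Set.ncard_image_le (Set.toFinite _))

theorem deg_derivedG_false_inr (e : G.edgeSet) : deg (derivedG G bk false) (Sum.inr e) = 2 := by
  obtain ⟨⟨x, y⟩, hxy⟩ := e
  have hne : (Sum.inl x : V ⊕ G.edgeSet) ≠ Sum.inl y := by
    simpa using (G.mem_edgeSet.mp hxy).ne
  rw [deg, ← Set.ncard_pair hne]
  congr 1
  ext (v | f)
  · simp [derivedG]
  · simp [derivedG]

end DerivedGraph

theorem SimpleGraph.Connected.eq_or_eq_of_deg_le_one {V : Type*} [Finite V] {G : SimpleGraph V}
    (hG : G.Connected) {a b : V} (hab : G.Adj a b) (hdeg : ∀ v, deg G v ≤ 1) (v : V) :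
    v = a ∨ v = b := by
  have hunique {u x y : V} (hx : G.Adj u x) (hy : G.Adj u y) : x = y :=
    (Set.ncard_le_one (Set.toFinite _)).mp (hdeg u) x hx y hy
  induction (reachable_iff_reflTransGen a v).mp (hG.preconnected a v) with
  | refl => exact Or.inl rfl
  | tail _ hpq ih =>
    rcases ih with rfl | rfl
    exacts [Or.inr (hunique hpq hab), Or.inl (hunique hpq hab.symm)]

section FSum

variable {V W : Type*} {F : FOp} {G : SimpleGraph V} {H : SimpleGraph W}

theorem FSum_le_boxProd : FSum F G H ≤ FGraph F G □ H := by
  rintro p q (⟨h₁, -, h₃⟩ | ⟨h₁, h₂⟩)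
  exacts [boxProd_adj.mpr (Or.inr ⟨h₃, h₁⟩), boxProd_adj.mpr (Or.inl ⟨h₂, h₁⟩)]

theorem deg_FSum_inl [Finite V] [Finite W] (u : V) (w : W) :
    deg (FSum F G H) (Sum.inl u, w) = deg (FGraph F G) (Sum.inl u) + deg H w := by
  classical
  cases nonempty_fintype V
  cases nonempty_fintype W
  have hN : (FSum F G H).neighborSet (Sum.inl u, w) =
      (FGraph F G □ H).neighborSet (Sum.inl u, w) := by
    ext ⟨p, w'⟩
    simp only [mem_neighborSet, boxProd_adj, FSum]
    grind
  rw [deg, hN, ← deg, deg_eq_degree, degree_boxProd, deg_eq_degree, deg_eq_degree]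

theorem deg_le_deg_FSum [Finite V] [Finite W] (p : V ⊕ G.edgeSet) (w : W) :
    deg (FGraph F G) p ≤ deg (FSum F G H) (p, w) :=
  deg_le_deg_of_copy ⟨⟨fun p => (p, w), fun h => Or.inr ⟨rfl, h⟩⟩,
    fun _ _ h => (Prod.mk.inj h).1⟩ p

theorem mbt_FSum_S_le_mbt_subdividedPrism [Finite W] {a b : V} (hab : G.Adj a b)
    (hV : ∀ v, v = a ∨ v = b) : mbt (FSum FOp.S G H) ≤ mbt (subdividedPrism H) := by
  classical
  have hedge (e : G.edgeSet) : (e : Sym2 V) = s(a, b) := by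
    obtain ⟨⟨x, y⟩, hxy⟩ := e
    have hxy : G.Adj x y := hxy
    rcases hV x with rfl | rfl <;> rcases hV y with rfl | rfl
    exacts [absurd hxy (G.irrefl), rfl, Sym2.eq_swap, absurd hxy (G.irrefl)]
  let row : V ⊕ G.edgeSet → Fin 3 := Sum.elim (fun v => if v = a then 0 else 2) fun _ => 1
  refine mbt_le_mbt_of_copy ⟨⟨fun p => (row p.1, p.2), ?_⟩, ?_⟩
  · rintro ⟨p, w⟩ ⟨q, w'⟩ (⟨h₁, ⟨u, hu⟩, h₃⟩ | ⟨h₁, h₂⟩)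
    · simp only at h₁ hu; subst h₁ hu
      refine Or.inr ⟨rfl, ?_, h₃⟩
      by_cases hu : u = a <;> simp [row, hu]
    · simp only at h₁; subst h₁
      refine Or.inl ⟨rfl, ?_⟩
      rcases p with u | e <;> rcases q with v | f
      · exact absurd h₂.1 (by decide)
      · by_cases hu : u = a <;> simp [row, pathG, hu]
      · by_cases hv : v = a <;> simp [row, pathG, hv]
      · exact absurd h₂.1 (by decide)
  · rintro ⟨p, w⟩ ⟨q, w'⟩ h
    obtain ⟨h₁, rfl⟩ := Prod.mk.inj h
    rcases p with u | e <;> rcases q with v | f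
    · rcases hV u with rfl | rfl <;> rcases hV v with rfl | rfl <;> simp [row, hab.ne'] at h₁ ⊢
    · by_cases hu : u = a <;> simp [row, hu] at h₁
    · by_cases hv : v = a <;> simp [row, hv] at h₁
    · rw [Subtype.ext ((hedge e).trans (hedge f).symm)]

end FSum

section Corner

variable {V W : Type*} [Fintype V] {G : SimpleGraph V} [DecidableRel G.Adj]
  {H : SimpleGraph W}

theorem exists_maxDeg_le_deg_derivedG_inl [Nonempty V] (wt : Bool) :
    ∃ u, maxDeg (derivedG G true wt) ≤ deg (derivedG G true wt) (Sum.inl u) := by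
  obtain ⟨z, hz⟩ := exists_maxDeg_eq_deg G
  obtain ⟨u | ⟨⟨x, y⟩, hxy⟩, hp⟩ := exists_maxDeg_eq_deg (derivedG G true wt)
  · exact ⟨u, hp.le⟩
  refine ⟨z, ?_⟩
  have := le_maxDeg G x
  have := le_maxDeg G y
  calc maxDeg (derivedG G true wt) = deg (derivedG G true wt) (Sum.inr ⟨s(x, y), hxy⟩) := hp
    _ ≤ deg G x + deg G y := deg_derivedG_inr_le _ rfl
    _ ≤ 2 * deg G z := by omega
    _ ≤ deg (derivedG G true wt) (Sum.inl z) := two_mul_deg_le_deg_derivedG_inl z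

theorem FOp.eq_S_of_forall_deg_inl_lt [Nonempty V] {F : FOp} (hF : F ≠ FOp.Q)
    (h : ∀ u, deg (FGraph F G) (Sum.inl u) < maxDeg (FGraph F G)) : F = FOp.S := by
  cases F with
  | S => rfl
  | Q => exact absurd rfl hF
  | R | T =>
    obtain ⟨u, hu⟩ := exists_maxDeg_le_deg_derivedG_inl (G := G) _
    exact absurd hu (h u).not_ge

theorem mbt_FSum_S_le_maxDeg [Fintype W] [Nonempty W] (hG : G.Connected) {x y : V}
    (hxy : G.Adj x y) (hdisp : mbt H = maxDeg H)
    (h : ∀ u, deg (FGraph FOp.S G) (Sum.inl u) < maxDeg (FGraph FOp.S G)) :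
    mbt (FSum FOp.S G H) ≤ maxDeg (FSum FOp.S G H) := by
  have : Nonempty V := ⟨x⟩
  obtain ⟨u | e, hp⟩ := exists_maxDeg_eq_deg (FGraph FOp.S G)
  · exact absurd hp.le (h u).not_ge
  have hinr : deg (FGraph FOp.S G) (Sum.inr e) = 2 := deg_derivedG_false_inr e
  have hinl (v : V) : deg G v ≤ deg (FGraph FOp.S G) (Sum.inl v) := deg_le_deg_derivedG_inl v
  have hV := hG.eq_or_eq_of_deg_le_one hxy fun v => by have := h v; have := hinl v; omega
  obtain ⟨w, hw⟩ := exists_maxDeg_eq_deg H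
  have hx : 1 ≤ deg G x := (Set.ncard_pos (Set.toFinite _)).mpr ⟨y, hxy⟩
  have hrow : deg H w + 1 ≤ maxDeg (FSum FOp.S G H) :=
    calc deg H w + 1 ≤ deg (FGraph FOp.S G) (Sum.inl x) + deg H w := by have := hinl x; omega
      _ = deg (FSum FOp.S G H) (Sum.inl x, w) := (deg_FSum_inl x w).symm
      _ ≤ maxDeg (FSum FOp.S G H) := le_maxDeg _ _
  have hrung : 2 ≤ maxDeg (FSum FOp.S G H) :=
    calc 2 = deg (FGraph FOp.S G) (Sum.inr e) := hinr.symm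
      _ ≤ deg (FSum FOp.S G H) (Sum.inr e, w) := deg_le_deg_FSum _ w
      _ ≤ maxDeg (FSum FOp.S G H) := le_maxDeg _ _
  calc mbt (FSum FOp.S G H) ≤ mbt (subdividedPrism H) := mbt_FSum_S_le_mbt_subdividedPrism hxy hV
    _ ≤ max (mbt H) 1 + 1 := mbt_subdividedPrism_le
    _ ≤ maxDeg (FSum FOp.S G H) := by rw [hdisp, hw]; omega

end Corner

theorem FSum_dispersable_general (F : FOp) (hF : F ≠ FOp.Q) {V W : Type*}
    [Fintype V] [Fintype W]
    (G : SimpleGraph V) [DecidableRel G.Adj] (H : SimpleGraph W)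
    (hGconn : G.Connected) (hGE : G.edgeSet.Nonempty)
    (hbip : H.Colorable 2) (hdisp : mbt H = maxDeg H)
    (hFG : mbt (FGraph F G) = maxDeg (FGraph F G)) :
    mbt (FSum F G H) = maxDeg (FSum F G H) := by
  refine le_antisymm ?_ (maxDeg_le_mbt _)
  cases isEmpty_or_nonempty W
  · simp [mbt_eq_zero_of_isEmpty]
  obtain ⟨⟨x, y⟩, hxy⟩ := hGE
  have : Nonempty V := ⟨x⟩
  by_cases hinl : ∃ u, maxDeg (FGraph F G) ≤ deg (FGraph F G) (Sum.inl u)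
  · obtain ⟨u, hu⟩ := hinl
    obtain ⟨w, hw⟩ := exists_maxDeg_eq_deg H
    calc mbt (FSum F G H) ≤ mbt (FGraph F G □ H) :=
          mbt_le_mbt_of_copy (.ofLE _ _ FSum_le_boxProd)
      _ ≤ mbt (FGraph F G) + mbt H := mbt_boxProd_le hbip
      _ ≤ deg (FGraph F G) (Sum.inl u) + deg H w := by rw [hFG, hdisp, hw]; omega
      _ = deg (FSum F G H) (Sum.inl u, w) := (deg_FSum_inl u w).symm
      _ ≤ maxDeg (FSum F G H) := le_maxDeg _ _
  · push Not at hinl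
    obtain rfl := FOp.eq_S_of_forall_deg_inl_lt hF hinl
    exact mbt_FSum_S_le_maxDeg hGconn hxy hdisp hinl

/-- For `F ∈ {S, R, T}`, a finite connected simple graph `G` with at least
one edge, and a finite dispersable bipartite graph `H`: if `F(G)` is dispersable then
`G +_F H` is dispersable. -/
theorem FSum_dispersable (F : FOp) (hF : F ≠ FOp.Q) {V W : Type*}
    [Fintype V] [DecidableEq V] [Fintype W]
    (G : SimpleGraph V) [DecidableRel G.Adj] (H : SimpleGraph W)
    (hGconn : G.Connected) (hGE : G.edgeSet.Nonempty)
    (hbip : H.Colorable 2) (hdisp : mbt H = maxDeg H)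
    (hFG : mbt (FGraph F G) = maxDeg (FGraph F G)) :
    mbt (FSum F G H) = maxDeg (FSum F G H) :=
  FSum_dispersable_general F hF G H hGconn hGE hbip hdisp hFG
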